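/- (Inheritance of outward minimality) Let K be a suitable convolution kernel on ℝ^d, let Ω ⊆ ℝ^d be measurable with finite Lebesgue measure, and let E₀ ⊆ Ω be measurable with T_K E₀ ∪ E₀ ⊆ Ω. Set E₁ := T_K E₀. Let 𝒜 be a real-valued function on the measurable subsets of Ω \ E₀ with 𝒜(F) ≥ −S_K(F) for all such F. Assume that for every measurable F ⊆ Ω one has P_K(E₀ ∪ F) ≥ P_K(E₀) + 𝒜(F \ E₀). Then for every measurable F ⊆ Ω one has P_K(E₁ ∪ F) ≥ P_K(E₁) + 𝒜(F \ E₀) + ∫_{F ∩ (E₀ \ E₁)} K ∗ (2 χ_{E₀ \ E₁} − χ_{F ∩ (E₀ \ E₁)}) dx. In particular, if E₀ is K-outward minimizing in Ω (the case 𝒜 ≡ 0), then so is E₁. -/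
import Mathlib
set_option maxHeartbeats 1600000


open MeasureTheory
open scoped ENNReal

/-- The convolution of a kernel `K` with a function `f`. -/
noncomputable def convF {d : ℕ} (K : EuclideanSpace ℝ (Fin d) → ℝ)
    (f : EuclideanSpace ℝ (Fin d) → ℝ) (x : EuclideanSpace ℝ (Fin d)) : ℝ :=
  ∫ y, K (x - y) * f y

/-- The convolution of a kernel `K` with the indicator function of a set `E`. -/
noncomputable def conv {d : ℕ} (K : EuclideanSpace ℝ (Fin d) → ℝ)
    (E : Set (EuclideanSpace ℝ (Fin d))) (x : EuclideanSpace ℝ (Fin d)) : ℝ :=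
  convF K (E.indicator (fun _ => (1 : ℝ))) x

/-- The thresholding operator `T_K E = {x | (K ∗ χ_E)(x) > 1/2}`. -/
def thresh {d : ℕ} (K : EuclideanSpace ℝ (Fin d) → ℝ)
    (E : Set (EuclideanSpace ℝ (Fin d))) : Set (EuclideanSpace ℝ (Fin d)) :=
  {x | 1 / 2 < conv K E x}

/-- The (real-valued) `K`-perimeter `P_K(D) = ∫_{Dᶜ} K ∗ χ_D`. -/
noncomputable def PKr {d : ℕ} (K : EuclideanSpace ℝ (Fin d) → ℝ)
    (D : Set (EuclideanSpace ℝ (Fin d))) : ℝ :=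
  ∫ x in Dᶜ, conv K D x

/-- The (real-valued) self-interaction `S_K(D) = ∫_D K ∗ χ_D`. -/
noncomputable def SKr {d : ℕ} (K : EuclideanSpace ℝ (Fin d) → ℝ)
    (D : Set (EuclideanSpace ℝ (Fin d))) : ℝ :=
  ∫ x in D, conv K D x

namespace InheritAux

variable {d : ℕ}


/-- The double kernel integral `J(X,Y) = ∫_X ∫_Y K(x-y)`, in `ℝ≥0∞`. -/
noncomputable def JJ (K : (EuclideanSpace ℝ (Fin d)) → ℝ) (X Y : Set (EuclideanSpace ℝ (Fin d))) : ℝ≥0∞ :=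
  ∫⁻ x in X, ∫⁻ y in Y, ENNReal.ofReal (K (x - y))

/-- Real-valued version of `JJ`. -/
noncomputable def jr (K : (EuclideanSpace ℝ (Fin d)) → ℝ) (X Y : Set (EuclideanSpace ℝ (Fin d))) : ℝ := (JJ K X Y).toReal

variable {K : (EuclideanSpace ℝ (Fin d)) → ℝ}

lemma meas_uncurry (hK : Measurable K) :
    Measurable (Function.uncurry fun x y : (EuclideanSpace ℝ (Fin d)) => ENNReal.ofReal (K (x - y))) :=
  (hK.comp (measurable_fst.sub measurable_snd)).ennreal_ofReal

lemma meas_inner (hK : Measurable K) (Y : Set (EuclideanSpace ℝ (Fin d))) :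
    Measurable fun x : (EuclideanSpace ℝ (Fin d)) => ∫⁻ y in Y, ENNReal.ofReal (K (x - y)) :=
  Measurable.lintegral_prod_right (meas_uncurry hK)

lemma lint_full (hK : Measurable K) (hK0 : ∀ x, 0 ≤ K x) (hKint : Integrable K)
    (hK1 : ∫ x, K x = 1) (x : (EuclideanSpace ℝ (Fin d))) :
    ∫⁻ y, ENNReal.ofReal (K (x - y)) = 1 := by
  have h1 : ∫⁻ y, ENNReal.ofReal (K (x - y)) = ∫⁻ y, ENNReal.ofReal (K y) :=
    (Measure.measurePreserving_sub_left volume x).lintegral_comp hK.ennreal_ofReal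
  rw [h1, ← ofReal_integral_eq_lintegral_ofReal hKint (ae_of_all _ hK0), hK1, ENNReal.ofReal_one]

lemma lint_full' (hK : Measurable K) (hK0 : ∀ x, 0 ≤ K x) (hKint : Integrable K)
    (hK1 : ∫ x, K x = 1) (y : (EuclideanSpace ℝ (Fin d))) :
    ∫⁻ x, ENNReal.ofReal (K (x - y)) = 1 := by
  have h1 : ∫⁻ x, ENNReal.ofReal (K (x - y)) = ∫⁻ x, ENNReal.ofReal (K x) :=
    (measurePreserving_sub_right volume y).lintegral_comp hK.ennreal_ofReal
  rw [h1, ← ofReal_integral_eq_lintegral_ofReal hKint (ae_of_all _ hK0), hK1, ENNReal.ofReal_one]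

lemma inner_le_one (hK : Measurable K) (hK0 : ∀ x, 0 ≤ K x) (hKint : Integrable K)
    (hK1 : ∫ x, K x = 1) (x : (EuclideanSpace ℝ (Fin d))) (Y : Set (EuclideanSpace ℝ (Fin d))) :
    ∫⁻ y in Y, ENNReal.ofReal (K (x - y)) ≤ 1 :=
  le_trans (lintegral_mono' Measure.restrict_le_self le_rfl)
    (le_of_eq (lint_full hK hK0 hKint hK1 x))

lemma conv_eq_integral (E : Set (EuclideanSpace ℝ (Fin d))) (x : (EuclideanSpace ℝ (Fin d))) :
    conv K E x = ∫ y, E.indicator (fun y => K (x - y)) y := by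
  unfold conv convF
  congr 1
  funext y
  by_cases h : y ∈ E <;> simp [h]

lemma conv_eq (hK : Measurable K) (hK0 : ∀ x, 0 ≤ K x) {E : Set (EuclideanSpace ℝ (Fin d))}
    (hE : MeasurableSet E) (x : (EuclideanSpace ℝ (Fin d))) :
    conv K E x = (∫⁻ y in E, ENNReal.ofReal (K (x - y))).toReal := by
  have hm : Measurable fun y : EuclideanSpace ℝ (Fin d) => K (x - y) :=
    hK.comp (measurable_const.sub measurable_id)
  rw [conv_eq_integral, integral_indicator hE]
  exact integral_eq_lintegral_of_nonneg_ae (ae_of_all _ fun y => hK0 _)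
    hm.aestronglyMeasurable

lemma conv_nonneg' (hK : Measurable K) (hK0 : ∀ x, 0 ≤ K x) {E : Set (EuclideanSpace ℝ (Fin d))}
    (hE : MeasurableSet E) (x : (EuclideanSpace ℝ (Fin d))) : 0 ≤ conv K E x := by
  rw [conv_eq hK hK0 hE]; exact ENNReal.toReal_nonneg

lemma conv_le_one (hK : Measurable K) (hK0 : ∀ x, 0 ≤ K x) (hKint : Integrable K)
    (hK1 : ∫ x, K x = 1) {E : Set (EuclideanSpace ℝ (Fin d))} (hE : MeasurableSet E) (x : (EuclideanSpace ℝ (Fin d))) :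
    conv K E x ≤ 1 := by
  rw [conv_eq hK hK0 hE]
  have h := ENNReal.toReal_mono ENNReal.one_ne_top (inner_le_one hK hK0 hKint hK1 x E)
  simpa using h

lemma conv_measurable (hK : Measurable K) (hK0 : ∀ x, 0 ≤ K x) {E : Set (EuclideanSpace ℝ (Fin d))}
    (hE : MeasurableSet E) : Measurable (conv K E) := by
  have h : conv K E = fun x => (∫⁻ y in E, ENNReal.ofReal (K (x - y))).toReal :=
    funext (conv_eq hK hK0 hE)
  rw [h]
  exact (meas_inner hK E).ennreal_toReal

lemma setIntegral_conv (hK : Measurable K) (hK0 : ∀ x, 0 ≤ K x) (hKint : Integrable K)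
    (hK1 : ∫ x, K x = 1) (X : Set (EuclideanSpace ℝ (Fin d))) {E : Set (EuclideanSpace ℝ (Fin d))} (hE : MeasurableSet E) :
    ∫ x in X, conv K E x = jr K X E := by
  unfold jr JJ
  rw [← integral_toReal ((meas_inner hK E).aemeasurable)
    (ae_of_all _ fun x => lt_of_le_of_lt (inner_le_one hK hK0 hKint hK1 x E) ENNReal.one_lt_top)]
  exact integral_congr_ae (ae_of_all _ fun x => conv_eq hK hK0 hE x)

lemma JJ_le_left (hK : Measurable K) (hK0 : ∀ x, 0 ≤ K x) (hKint : Integrable K)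
    (hK1 : ∫ x, K x = 1) (X Y : Set (EuclideanSpace ℝ (Fin d))) : JJ K X Y ≤ volume X := by
  unfold JJ
  calc ∫⁻ x in X, ∫⁻ y in Y, ENNReal.ofReal (K (x - y))
      ≤ ∫⁻ _ in X, 1 := lintegral_mono fun x => inner_le_one hK hK0 hKint hK1 x Y
    _ = volume X := setLIntegral_one X

lemma JJ_ne_top (hK : Measurable K) (hK0 : ∀ x, 0 ≤ K x) (hKint : Integrable K)
    (hK1 : ∫ x, K x = 1) {X : Set (EuclideanSpace ℝ (Fin d))} (Y : Set (EuclideanSpace ℝ (Fin d))) (hX : volume X ≠ ⊤) : JJ K X Y ≠ ⊤ :=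
  ne_top_of_le_ne_top hX (JJ_le_left hK hK0 hKint hK1 X Y)

lemma JJ_symm (hK : Measurable K) (hKeven : ∀ x, K (-x) = K x) (X Y : Set (EuclideanSpace ℝ (Fin d))) :
    JJ K X Y = JJ K Y X := by
  unfold JJ
  rw [lintegral_lintegral_swap (meas_uncurry hK).aemeasurable]
  refine lintegral_congr fun y => lintegral_congr fun x => ?_
  have h : K (x - y) = K (y - x) := by rw [← hKeven (y - x), neg_sub]
  rw [h]

lemma JJ_union_left {A B : Set (EuclideanSpace ℝ (Fin d))} (hB : MeasurableSet B) (hd : Disjoint A B) (Y : Set (EuclideanSpace ℝ (Fin d))) :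
    JJ K (A ∪ B) Y = JJ K A Y + JJ K B Y := lintegral_union hB hd

lemma JJ_mono_right {Y Y' : Set (EuclideanSpace ℝ (Fin d))} (h : Y ⊆ Y') (X : Set (EuclideanSpace ℝ (Fin d))) : JJ K X Y ≤ JJ K X Y' :=
  lintegral_mono fun x => lintegral_mono' (Measure.restrict_mono h le_rfl) le_rfl

lemma jr_nonneg (X Y : Set (EuclideanSpace ℝ (Fin d))) : 0 ≤ jr K X Y := ENNReal.toReal_nonneg

lemma jr_symm (hK : Measurable K) (hKeven : ∀ x, K (-x) = K x) (X Y : Set (EuclideanSpace ℝ (Fin d))) :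
    jr K X Y = jr K Y X := congrArg ENNReal.toReal (JJ_symm hK hKeven X Y)

lemma jr_union_left (hK : Measurable K) (hK0 : ∀ x, 0 ≤ K x) (hKint : Integrable K)
    (hK1 : ∫ x, K x = 1) {A B : Set (EuclideanSpace ℝ (Fin d))} (hB : MeasurableSet B) (hd : Disjoint A B)
    (hAfin : volume A ≠ ⊤) (hBfin : volume B ≠ ⊤) (Y : Set (EuclideanSpace ℝ (Fin d))) :
    jr K (A ∪ B) Y = jr K A Y + jr K B Y := by
  unfold jr
  rw [JJ_union_left hB hd, ENNReal.toReal_add (JJ_ne_top hK hK0 hKint hK1 Y hAfin)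
    (JJ_ne_top hK hK0 hKint hK1 Y hBfin)]

lemma jr_union_right (hK : Measurable K) (hK0 : ∀ x, 0 ≤ K x) (hKeven : ∀ x, K (-x) = K x)
    (hKint : Integrable K) (hK1 : ∫ x, K x = 1) {A B : Set (EuclideanSpace ℝ (Fin d))} (hB : MeasurableSet B)
    (hd : Disjoint A B) (hAfin : volume A ≠ ⊤) (hBfin : volume B ≠ ⊤) (X : Set (EuclideanSpace ℝ (Fin d))) :
    jr K X (A ∪ B) = jr K X A + jr K X B := by
  rw [jr_symm hK hKeven X (A ∪ B), jr_union_left hK hK0 hKint hK1 hB hd hAfin hBfin X,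
    jr_symm hK hKeven A X, jr_symm hK hKeven B X]

lemma jr_mono_right (hK : Measurable K) (hK0 : ∀ x, 0 ≤ K x) (hKint : Integrable K)
    (hK1 : ∫ x, K x = 1) {X Y Y' : Set (EuclideanSpace ℝ (Fin d))} (h : Y ⊆ Y') (hXfin : volume X ≠ ⊤) :
    jr K X Y ≤ jr K X Y' :=
  ENNReal.toReal_mono (JJ_ne_top hK hK0 hKint hK1 Y' hXfin) (JJ_mono_right h X)

lemma PKr_eq (hK : Measurable K) (hK0 : ∀ x, 0 ≤ K x) (hKeven : ∀ x, K (-x) = K x)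
    (hKint : Integrable K) (hK1 : ∫ x, K x = 1) {D : Set (EuclideanSpace ℝ (Fin d))} (hD : MeasurableSet D)
    (hfin : volume D ≠ ⊤) :
    PKr K D = (volume D).toReal - jr K D D := by
  have h1 : PKr K D = jr K Dᶜ D := setIntegral_conv hK hK0 hKint hK1 Dᶜ hD
  have h3 : ∫⁻ x, ∫⁻ y in D, ENNReal.ofReal (K (x - y)) = volume D := by
    rw [lintegral_lintegral_swap (μ := volume) (ν := volume.restrict D)
      (meas_uncurry hK).aemeasurable]
    calc ∫⁻ y in D, ∫⁻ x, ENNReal.ofReal (K (x - y))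
        = ∫⁻ _ in D, 1 := lintegral_congr fun y => lint_full' hK hK0 hKint hK1 y
      _ = volume D := setLIntegral_one D
  have h2 : JJ K D D + JJ K Dᶜ D = volume D := by
    unfold JJ
    rw [lintegral_add_compl (fun x => ∫⁻ y in D, ENNReal.ofReal (K (x - y))) hD, h3]
  have hDD : JJ K D D ≠ ⊤ := JJ_ne_top hK hK0 hKint hK1 D hfin
  have hDc : JJ K Dᶜ D ≠ ⊤ := by
    intro htop
    rw [htop, add_top] at h2
    exact hfin h2.symm
  have h4 : (volume D).toReal = jr K D D + jr K Dᶜ D := by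
    rw [← h2, ENNReal.toReal_add hDD hDc]; rfl
  rw [h1]
  linarith [h4]

lemma PKr_union (hK : Measurable K) (hK0 : ∀ x, 0 ≤ K x) (hKeven : ∀ x, K (-x) = K x)
    (hKint : Integrable K) (hK1 : ∫ x, K x = 1) {D G : Set (EuclideanSpace ℝ (Fin d))}
    (hD : MeasurableSet D) (hG : MeasurableSet G) (hDfin : volume D ≠ ⊤)
    (hGfin : volume G ≠ ⊤) (hd : Disjoint D G) :
    PKr K (D ∪ G) = PKr K D + (volume G).toReal - jr K G G - 2 * jr K D G := by
  have hUfin : volume (D ∪ G) ≠ ⊤ := by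
    refine ne_top_of_le_ne_top ?_ (measure_union_le D G)
    exact ENNReal.add_ne_top.mpr ⟨hDfin, hGfin⟩
  rw [PKr_eq hK hK0 hKeven hKint hK1 (hD.union hG) hUfin,
    PKr_eq hK hK0 hKeven hKint hK1 hD hDfin]
  have hm : (volume (D ∪ G)).toReal = (volume D).toReal + (volume G).toReal := by
    rw [measure_union hd hG, ENNReal.toReal_add hDfin hGfin]
  have hj : jr K (D ∪ G) (D ∪ G) = jr K D D + jr K G G + 2 * jr K D G := by
    rw [jr_union_left hK hK0 hKint hK1 hG hd hDfin hGfin (D ∪ G),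
      jr_union_right hK hK0 hKeven hKint hK1 hG hd hDfin hGfin D,
      jr_union_right hK hK0 hKeven hKint hK1 hG hd hDfin hGfin G,
      jr_symm hK hKeven G D]
    ring
  rw [hm, hj]
  ring

lemma SKr_eq (hK : Measurable K) (hK0 : ∀ x, 0 ≤ K x) (hKint : Integrable K)
    (hK1 : ∫ x, K x = 1) {D : Set (EuclideanSpace ℝ (Fin d))} (hD : MeasurableSet D) :
    SKr K D = jr K D D := setIntegral_conv hK hK0 hKint hK1 D hD

lemma convF_two (hK : Measurable K) (hKint : Integrable K) {A N : Set (EuclideanSpace ℝ (Fin d))}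
    (hA : MeasurableSet A) (hN : MeasurableSet N) (x : (EuclideanSpace ℝ (Fin d))) :
    convF K (fun y => 2 * A.indicator (fun _ => (1 : ℝ)) y
      - N.indicator (fun _ => (1 : ℝ)) y) x
      = 2 * conv K A x - conv K N x := by
  have key : ∀ (S : Set (EuclideanSpace ℝ (Fin d))), (fun y => K (x - y) * S.indicator (fun _ => (1 : ℝ)) y)
      = S.indicator (fun y => K (x - y)) := by
    intro S
    funext y
    by_cases h : y ∈ S <;> simp [h]
  have hiA : Integrable (fun y => K (x - y) * A.indicator (fun _ => (1 : ℝ)) y) volume := by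
    rw [key A]; exact (hKint.comp_sub_left x).indicator hA
  have hiN : Integrable (fun y => K (x - y) * N.indicator (fun _ => (1 : ℝ)) y) volume := by
    rw [key N]; exact (hKint.comp_sub_left x).indicator hN
  unfold convF conv convF
  have h : (fun y => K (x - y) * (2 * A.indicator (fun _ => (1 : ℝ)) y
      - N.indicator (fun _ => (1 : ℝ)) y))
      = fun y => 2 * (K (x - y) * A.indicator (fun _ => (1 : ℝ)) y)
        - K (x - y) * N.indicator (fun _ => (1 : ℝ)) y := by
    funext y; ring
  rw [h, integral_sub (hiA.const_mul 2) hiN, integral_const_mul]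

lemma conv_integrable_on (hK : Measurable K) (hK0 : ∀ x, 0 ≤ K x) (hKint : Integrable K)
    (hK1 : ∫ x, K x = 1) {E N : Set (EuclideanSpace ℝ (Fin d))} (hE : MeasurableSet E) (hNfin : volume N ≠ ⊤) :
    Integrable (conv K E) (volume.restrict N) := by
  haveI : IsFiniteMeasure (volume.restrict N) :=
    ⟨by rw [Measure.restrict_apply_univ]; exact lt_top_iff_ne_top.mpr hNfin⟩
  refine ⟨(conv_measurable hK hK0 hE).aestronglyMeasurable, ?_⟩
  refine HasFiniteIntegral.of_bounded (C := 1) (ae_of_all _ fun x => ?_)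
  rw [Real.norm_eq_abs, abs_of_nonneg (conv_nonneg' hK hK0 hE x)]
  exact conv_le_one hK hK0 hKint hK1 hE x

lemma corr_eq (hK : Measurable K) (hK0 : ∀ x, 0 ≤ K x) (hKint : Integrable K)
    (hK1 : ∫ x, K x = 1) {A N : Set (EuclideanSpace ℝ (Fin d))} (hA : MeasurableSet A) (hN : MeasurableSet N)
    (hNfin : volume N ≠ ⊤) :
    ∫ x in N, convF K (fun y => 2 * A.indicator (fun _ => (1 : ℝ)) y
      - N.indicator (fun _ => (1 : ℝ)) y) x
      = 2 * jr K N A - jr K N N := by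
  have h1 : ∀ x : (EuclideanSpace ℝ (Fin d)), convF K (fun y => 2 * A.indicator (fun _ => (1 : ℝ)) y
      - N.indicator (fun _ => (1 : ℝ)) y) x = 2 * conv K A x - conv K N x :=
    convF_two hK hKint hA hN
  simp only [h1]
  rw [integral_sub ((conv_integrable_on hK hK0 hKint hK1 hA hNfin).const_mul 2)
    (conv_integrable_on hK hK0 hKint hK1 hN hNfin), integral_const_mul,
    setIntegral_conv hK hK0 hKint hK1 N hA, setIntegral_conv hK hK0 hKint hK1 N hN]

lemma null_of (hK : Measurable K) (hK0 : ∀ x, 0 ≤ K x) (hKint : Integrable K)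
    (hK1 : ∫ x, K x = 1) {B E : Set (EuclideanSpace ℝ (Fin d))} (hB : MeasurableSet B) (hBfin : volume B ≠ ⊤)
    (hE : MeasurableSet E) (hpt : ∀ x ∈ B, (1 : ℝ) / 2 < conv K E x)
    (hineq : 2 * jr K B E ≤ (volume B).toReal) : volume B = 0 := by
  set f : (EuclideanSpace ℝ (Fin d)) → ℝ≥0∞ := fun x => ∫⁻ y in E, ENNReal.ofReal (K (x - y)) with hf
  have hfm : Measurable f := meas_inner hK E
  have hJJB : JJ K B E ≠ ⊤ := JJ_ne_top hK hK0 hKint hK1 E hBfin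
  have h1 : ∫⁻ x in B, f x ≤ ENNReal.ofReal (1 / 2) * volume B := by
    have hrhs : (ENNReal.ofReal (1 / 2) * volume B).toReal
        = 1 / 2 * (volume B).toReal := by
      rw [ENNReal.toReal_mul, ENNReal.toReal_ofReal (by norm_num)]
    have hne : ENNReal.ofReal (1 / 2) * volume B ≠ ⊤ :=
      ENNReal.mul_ne_top ENNReal.ofReal_ne_top hBfin
    have hJeq : JJ K B E = ∫⁻ x in B, f x := rfl
    rw [← hJeq, ← ENNReal.toReal_le_toReal hJJB hne, hrhs]
    unfold jr at hineq
    linarith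
  have hcfin : ∫⁻ _ in B, ENNReal.ofReal (1 / 2) ≠ ⊤ := by
    rw [setLIntegral_const]
    exact ENNReal.mul_ne_top ENNReal.ofReal_ne_top hBfin
  have hle : (fun _ => ENNReal.ofReal (1 / 2)) ≤ᵐ[volume.restrict B] f := by
    rw [Filter.EventuallyLE, ae_restrict_iff' hB]
    refine ae_of_all _ fun x hx => ?_
    refine ENNReal.ofReal_le_of_le_toReal ?_
    rw [← conv_eq hK hK0 hE]
    exact le_of_lt (hpt x hx)
  have hsub : ∫⁻ x in B, (f x - ENNReal.ofReal (1 / 2)) = 0 := by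
    rw [lintegral_sub measurable_const hcfin hle]
    refine tsub_eq_zero_of_le ?_
    calc ∫⁻ x in B, f x ≤ ENNReal.ofReal (1 / 2) * volume B := h1
      _ = ∫⁻ _ in B, ENNReal.ofReal (1 / 2) := (setLIntegral_const B _).symm
  have hae := (lintegral_eq_zero_iff (hfm.sub measurable_const)).mp hsub
  have hae2 := (ae_restrict_iff' hB).mp hae
  have hnm : ∀ᵐ x ∂(volume : Measure (EuclideanSpace ℝ (Fin d))), x ∉ B := by
    filter_upwards [hae2] with x hx
    intro hxB
    have h3 : f x ≤ ENNReal.ofReal (1 / 2) := tsub_eq_zero_iff_le.mp (hx hxB)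
    have h4 : conv K E x ≤ 1 / 2 := by
      have h5 := ENNReal.toReal_mono ENNReal.ofReal_ne_top h3
      rw [ENNReal.toReal_ofReal (by norm_num)] at h5
      rw [conv_eq hK hK0 hE]
      exact h5
    exact absurd (hpt x hxB) (not_lt.mpr h4)
  exact measure_eq_zero_iff_ae_notMem.mpr hnm

lemma conv_congr_set {D D' : Set (EuclideanSpace ℝ (Fin d))} (h : D =ᵐ[volume] D') : conv K D = conv K D' := by
  funext x
  unfold conv convF
  refine integral_congr_ae ?_
  filter_upwards [h] with y hy
  have hy' : (y ∈ D) = (y ∈ D') := hy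
  by_cases hmem : y ∈ D
  · rw [Set.indicator_of_mem hmem, Set.indicator_of_mem (hy' ▸ hmem)]
  · rw [Set.indicator_of_notMem hmem, Set.indicator_of_notMem (fun hc => hmem (hy' ▸ hc))]

lemma PKr_ae_congr {D D' : Set (EuclideanSpace ℝ (Fin d))} (h : D =ᵐ[volume] D') : PKr K D = PKr K D' := by
  unfold PKr
  rw [conv_congr_set h]
  refine setIntegral_congr_set ?_
  filter_upwards [h] with x hx
  have hx' : (x ∈ D) = (x ∈ D') := hx
  show (x ∈ Dᶜ) = (x ∈ D'ᶜ)
  simp only [Set.mem_compl_iff, hx']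

/-- The master inequality (part 1 of the theorem), for a measurable kernel. -/
theorem main_ineq (hK : Measurable K) (hK0 : ∀ x, 0 ≤ K x) (hKeven : ∀ x, K (-x) = K x)
    (hKint : Integrable K) (hK1 : ∫ x, K x = 1)
    {Ω : Set (EuclideanSpace ℝ (Fin d))} (hΩfin : volume Ω < ⊤)
    {E₀ : Set (EuclideanSpace ℝ (Fin d))} (hE₀ : MeasurableSet E₀) (hbig : thresh K E₀ ∪ E₀ ⊆ Ω)
    (𝒜 : Set (EuclideanSpace ℝ (Fin d)) → ℝ)
    (h𝒜 : ∀ F : Set (EuclideanSpace ℝ (Fin d)), MeasurableSet F → F ⊆ Ω \ E₀ → -SKr K F ≤ 𝒜 F)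
    (hmin : ∀ F : Set (EuclideanSpace ℝ (Fin d)), MeasurableSet F → F ⊆ Ω → PKr K E₀ + 𝒜 (F \ E₀) ≤ PKr K (E₀ ∪ F))
    (F : Set (EuclideanSpace ℝ (Fin d))) (hF : MeasurableSet F) (hFΩ : F ⊆ Ω) :
    PKr K (thresh K E₀) + 𝒜 (F \ E₀) +
        ∫ x in F ∩ (E₀ \ thresh K E₀),
          convF K (fun y =>
            2 * (E₀ \ thresh K E₀).indicator (fun _ => (1 : ℝ)) y -
              (F ∩ (E₀ \ thresh K E₀)).indicator (fun _ => (1 : ℝ)) y) x ≤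
      PKr K (thresh K E₀ ∪ F) := by
  set E₁ := thresh K E₀ with hE₁def
  have hE₁m : MeasurableSet E₁ :=
    measurableSet_lt measurable_const (conv_measurable hK hK0 hE₀)
  have hE₁Ω : E₁ ⊆ Ω := fun x hx => hbig (Or.inl hx)
  have hE₀Ω : E₀ ⊆ Ω := fun x hx => hbig (Or.inr hx)
  have hfin : ∀ S : Set (EuclideanSpace ℝ (Fin d)), S ⊆ Ω → volume S ≠ ⊤ :=
    fun S h => (lt_of_le_of_lt (measure_mono h) hΩfin).ne
  -- Step 1: B := E₁ \ E₀ is null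
  set B := E₁ \ E₀ with hBdef
  have hBm : MeasurableSet B := hE₁m.diff hE₀
  have hBΩ : B ⊆ Ω := fun x hx => hE₁Ω hx.1
  have hBfin : volume B ≠ ⊤ := hfin B hBΩ
  have hE₀fin : volume E₀ ≠ ⊤ := hfin E₀ hE₀Ω
  have hBE₀ : B \ E₀ = B := by rw [hBdef, Set.diff_diff, Set.union_self]
  have h1 := hmin B hBm hBΩ
  rw [hBE₀] at h1
  have h2 := h𝒜 B hBm (fun x hx => ⟨hBΩ hx, hx.2⟩)
  have hdisj : Disjoint E₀ B := Set.disjoint_sdiff_right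
  rw [PKr_union hK hK0 hKeven hKint hK1 hE₀ hBm hE₀fin hBfin hdisj] at h1
  rw [SKr_eq hK hK0 hKint hK1 hBm] at h2
  have hkey : 2 * jr K B E₀ ≤ (volume B).toReal := by
    rw [jr_symm hK hKeven B E₀]
    linarith
  have hBnull : volume B = 0 :=
    null_of hK hK0 hKint hK1 hBm hBfin hE₀ (fun x hx => hx.1) hkey
  -- Step 2: set decompositions
  set A := E₀ \ E₁ with hAdef
  set N := F ∩ A with hNdef
  set G := F \ E₀ with hGdef
  set C := E₀ ∩ E₁ with hCdef
  have hAm : MeasurableSet A := hE₀.diff hE₁m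
  have hNm : MeasurableSet N := hF.inter hAm
  have hGm : MeasurableSet G := hF.diff hE₀
  have hCm : MeasurableSet C := hE₀.inter hE₁m
  have hAfin : volume A ≠ ⊤ := hfin A fun x hx => hE₀Ω hx.1
  have hNfin : volume N ≠ ⊤ := hfin N fun x hx => hFΩ hx.1
  have hGfin : volume G ≠ ⊤ := hfin G fun x hx => hFΩ hx.1
  have hCfin : volume C ≠ ⊤ := hfin C fun x hx => hE₀Ω hx.1
  have hE₁C : E₁ =ᵐ[volume] C := by
    rw [MeasureTheory.ae_eq_set]
    constructor
    · have : E₁ \ C = B := by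
        ext x
        simp only [hCdef, hBdef, Set.mem_diff, Set.mem_inter_iff]
        tauto
      rw [this]; exact hBnull
    · have : C \ E₁ = ∅ := by
        ext x
        simp only [hCdef, Set.mem_diff, Set.mem_inter_iff, Set.mem_empty_iff_false]
        tauto
      rw [this]; exact measure_empty
  -- disjointness
  have hdCA : Disjoint C A := by
    rw [Set.disjoint_iff_inter_eq_empty]
    ext x
    simp only [hCdef, hAdef, Set.mem_inter_iff, Set.mem_diff, Set.mem_empty_iff_false]
    tauto
  have hdCN : Disjoint C N := by
    rw [Set.disjoint_iff_inter_eq_empty]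
    ext x
    simp only [hCdef, hNdef, hAdef, Set.mem_inter_iff, Set.mem_diff,
      Set.mem_empty_iff_false]
    tauto
  have hdCAG : Disjoint (C ∪ A) G := by
    rw [Set.disjoint_iff_inter_eq_empty]
    ext x
    simp only [hCdef, hAdef, hGdef, Set.mem_inter_iff, Set.mem_diff, Set.mem_union,
      Set.mem_empty_iff_false]
    tauto
  have hdCNG : Disjoint (C ∪ N) G := by
    rw [Set.disjoint_iff_inter_eq_empty]
    ext x
    simp only [hCdef, hNdef, hAdef, hGdef, Set.mem_inter_iff, Set.mem_diff, Set.mem_union,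
      Set.mem_empty_iff_false]
    tauto
  -- set identities
  have hE₀eq : E₀ = C ∪ A := by rw [hCdef, hAdef, Set.inter_union_diff]
  have hE₀F : E₀ ∪ F = (C ∪ A) ∪ G := by
    rw [← hE₀eq, hGdef, Set.union_diff_self]
  have hCF : C ∪ F = (C ∪ N) ∪ G := by
    ext x
    simp only [hCdef, hNdef, hAdef, hGdef, Set.mem_union, Set.mem_inter_iff, Set.mem_diff]
    by_cases h₀ : x ∈ E₀ <;> by_cases h₁ : x ∈ E₁ <;> by_cases hf : x ∈ F <;> tauto
  have hCANfin : volume (C ∪ A) ≠ ⊤ := by rw [← hE₀eq]; exact hE₀fin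
  have hCNfin : volume (C ∪ N) ≠ ⊤ := by
    refine ne_top_of_le_ne_top (hfin Ω (fun x hx => hx) ) (measure_mono ?_)
    rintro x (hx | hx)
    · exact hE₀Ω hx.1
    · exact hFΩ hx.1
  -- PKr identities
  have hP1 : PKr K E₁ = PKr K C := PKr_ae_congr hE₁C
  have hP2 : PKr K (E₁ ∪ F) = PKr K ((C ∪ N) ∪ G) := by
    have h : ((E₁ ∪ F : Set (EuclideanSpace ℝ (Fin d)))) =ᵐ[volume] ((C ∪ F : Set (EuclideanSpace ℝ (Fin d)))) := by
      filter_upwards [hE₁C] with x hx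
      have hx' : (x ∈ E₁) = (x ∈ C) := hx
      show (x ∈ E₁ ∪ F) = (x ∈ C ∪ F)
      simp only [Set.mem_union, hx']
    rw [PKr_ae_congr h, hCF]
  -- expansions
  have hX1 : PKr K ((C ∪ N) ∪ G) = PKr K (C ∪ N) + (volume G).toReal - jr K G G
      - 2 * jr K (C ∪ N) G :=
    PKr_union hK hK0 hKeven hKint hK1 (hCm.union hNm) hGm hCNfin hGfin hdCNG
  have hX2 : PKr K (C ∪ N) = PKr K C + (volume N).toReal - jr K N N - 2 * jr K C N := by
    have hd : Disjoint C N := hdCN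
    exact PKr_union hK hK0 hKeven hKint hK1 hCm hNm hCfin hNfin hd
  have hX3 : jr K (C ∪ N) G = jr K C G + jr K N G :=
    jr_union_left hK hK0 hKint hK1 hNm hdCN hCfin hNfin G
  have hX4 : PKr K ((C ∪ A) ∪ G) = PKr K (C ∪ A) + (volume G).toReal - jr K G G
      - 2 * jr K (C ∪ A) G :=
    PKr_union hK hK0 hKeven hKint hK1 (hCm.union hAm) hGm hCANfin hGfin hdCAG
  have hX5 : jr K (C ∪ A) G = jr K C G + jr K A G :=
    jr_union_left hK hK0 hKint hK1 hAm hdCA hCfin hAfin G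
  -- the minimality hypothesis applied to F
  have hminF := hmin F hF hFΩ
  rw [hE₀F] at hminF
  have hPE₀ : PKr K E₀ = PKr K (C ∪ A) := by rw [← hE₀eq]
  rw [hPE₀] at hminF
  -- threshold bound: 2 * jr K N E₀ ≤ volume N
  have hNsubA : N ⊆ A := fun x hx => hx.2
  have hthr : 2 * jr K N E₀ ≤ (volume N).toReal := by
    have hJle : JJ K N E₀ ≤ ENNReal.ofReal (1 / 2) * volume N := by
      unfold JJ
      calc ∫⁻ x in N, ∫⁻ y in E₀, ENNReal.ofReal (K (x - y))
          ≤ ∫⁻ _ in N, ENNReal.ofReal (1 / 2) := by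
            refine setLIntegral_mono' hNm fun x hx => ?_
            have hx1 : x ∉ E₁ := (hNsubA hx).2
            have hx2 : conv K E₀ x ≤ 1 / 2 := le_of_not_gt hx1
            have hfin' : (∫⁻ y in E₀, ENNReal.ofReal (K (x - y))) ≠ ⊤ :=
              ne_top_of_le_ne_top ENNReal.one_ne_top (inner_le_one hK hK0 hKint hK1 x E₀)
            refine (ENNReal.le_ofReal_iff_toReal_le hfin' (by norm_num)).mpr ?_
            rw [← conv_eq hK hK0 hE₀]
            exact hx2
        _ = ENNReal.ofReal (1 / 2) * volume N := setLIntegral_const N _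
    have hne : ENNReal.ofReal (1 / 2) * volume N ≠ ⊤ :=
      ENNReal.mul_ne_top ENNReal.ofReal_ne_top hNfin
    have := ENNReal.toReal_mono hne hJle
    rw [ENNReal.toReal_mul, ENNReal.toReal_ofReal (by norm_num)] at this
    unfold jr
    linarith
  have hNE₀ : jr K N E₀ = jr K N C + jr K N A := by
    rw [hE₀eq]
    exact jr_union_right hK hK0 hKeven hKint hK1 hAm hdCA hCfin hAfin N
  -- monotonicity: jr K G N ≤ jr K G A
  have hmono : jr K G N ≤ jr K G A :=
    jr_mono_right hK hK0 hKint hK1 hNsubA hGfin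
  -- correction term
  have hcorr : ∫ x in N, convF K (fun y => 2 * A.indicator (fun _ => (1 : ℝ)) y
      - N.indicator (fun _ => (1 : ℝ)) y) x = 2 * jr K N A - jr K N N :=
    corr_eq hK hK0 hKint hK1 hAm hNm hNfin
  -- symmetry facts
  have hs1 : jr K N C = jr K C N := jr_symm hK hKeven N C
  have hs2 : jr K N G = jr K G N := jr_symm hK hKeven N G
  have hs3 : jr K A G = jr K G A := jr_symm hK hKeven A G
  -- conclude
  rw [hP1, hP2, hcorr, hX1, hX2, hX3]
  rw [hX4, hX5] at hminF
  linarith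

end InheritAux

/-- Inheritance of outward minimality: if `E₀ ⊆ Ω` (with `Ω` of finite measure, `Ω`
    sufficiently large) satisfies `P_K(E₀ ∪ F) ≥ P_K(E₀) + 𝒜(F \ E₀)` for all measurable
    `F ⊆ Ω`, for a functional `𝒜 ≥ −S_K`, then `E₁ = T_K E₀` satisfies, for all measurable
    `F ⊆ Ω`,
    `P_K(E₁ ∪ F) ≥ P_K(E₁) + 𝒜(F \ E₀) + ∫_{F ∩ (E₀\E₁)} K ∗ (2χ_{E₀\E₁} − χ_{F∩(E₀\E₁)})`.
    In particular, if `E₀` is `K`-outward minimizing in `Ω`, then so is `E₁`. -/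
theorem inheritance_of_outward_minimality
    {d : ℕ} (K : EuclideanSpace ℝ (Fin d) → ℝ)
    (hK0 : ∀ x, 0 ≤ K x) (hKeven : ∀ x, K (-x) = K x)
    (hKint : Integrable K) (hK1 : ∫ x, K x = 1)
    (Ω : Set (EuclideanSpace ℝ (Fin d))) (hΩ : MeasurableSet Ω) (hΩfin : volume Ω < ⊤)
    (E₀ : Set (EuclideanSpace ℝ (Fin d))) (hE₀ : MeasurableSet E₀)
    (hbig : thresh K E₀ ∪ E₀ ⊆ Ω)
    (𝒜 : Set (EuclideanSpace ℝ (Fin d)) → ℝ)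
    (h𝒜 : ∀ F : Set (EuclideanSpace ℝ (Fin d)), MeasurableSet F → F ⊆ Ω \ E₀ →
      -SKr K F ≤ 𝒜 F)
    (hmin : ∀ F : Set (EuclideanSpace ℝ (Fin d)), MeasurableSet F → F ⊆ Ω →
      PKr K E₀ + 𝒜 (F \ E₀) ≤ PKr K (E₀ ∪ F)) :
    (∀ F : Set (EuclideanSpace ℝ (Fin d)), MeasurableSet F → F ⊆ Ω →
      PKr K (thresh K E₀) + 𝒜 (F \ E₀) +
          ∫ x in F ∩ (E₀ \ thresh K E₀),
            convF K (fun y =>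
              2 * (E₀ \ thresh K E₀).indicator (fun _ => (1 : ℝ)) y -
                (F ∩ (E₀ \ thresh K E₀)).indicator (fun _ => (1 : ℝ)) y) x ≤
        PKr K (thresh K E₀ ∪ F)) ∧
    ((∀ F : Set (EuclideanSpace ℝ (Fin d)), MeasurableSet F → F ⊆ Ω →
        PKr K E₀ ≤ PKr K (E₀ ∪ F)) →
      (∀ F : Set (EuclideanSpace ℝ (Fin d)), MeasurableSet F → F ⊆ Ω →
        PKr K (thresh K E₀) ≤ PKr K (thresh K E₀ ∪ F))) := by
  classical
  -- replace K by a measurable representative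
  set K₀ := hKint.aestronglyMeasurable.mk K with hK₀def
  have hK₀m : Measurable K₀ := hKint.aestronglyMeasurable.stronglyMeasurable_mk.measurable
  have hK₀ae : K =ᵐ[volume] K₀ := hKint.aestronglyMeasurable.ae_eq_mk
  set Kt : EuclideanSpace ℝ (Fin d) → ℝ := fun x => max ((K₀ x + K₀ (-x)) / 2) 0 with hKtdef
  have hKtm : Measurable Kt :=
    ((hK₀m.add (hK₀m.comp measurable_neg)).div_const 2).max measurable_const
  have hKt0 : ∀ x, 0 ≤ Kt x := fun x => le_max_right _ _
  have hKteven : ∀ x, Kt (-x) = Kt x := by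
    intro x
    simp only [hKtdef, neg_neg]
    ring_nf
  have hneg : (fun x => K (-x)) =ᵐ[volume] fun x => K₀ (-x) :=
    hK₀ae.comp_tendsto (Measure.measurePreserving_neg
      (volume : Measure (EuclideanSpace ℝ (Fin d)))).quasiMeasurePreserving.tendsto_ae
  have hae : K =ᵐ[volume] Kt := by
    filter_upwards [hK₀ae, hneg] with x h1 h2
    have h3 : K₀ (-x) = K x := by rw [← h2]; exact hKeven x
    simp only [hKtdef, ← h1, h3]
    rw [show (K x + K x) / 2 = K x by ring, max_eq_left (hK0 x)]
  have hKtint : Integrable Kt := hKint.congr hae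
  have hKt1 : ∫ x, Kt x = 1 := by rw [← integral_congr_ae hae]; exact hK1
  -- transfer all the functionals
  have hconvF : convF (d := d) K = convF Kt := by
    funext f x
    unfold convF
    refine integral_congr_ae ?_
    have h := hae.comp_tendsto (Measure.measurePreserving_sub_left
      (volume : Measure (EuclideanSpace ℝ (Fin d))) x).quasiMeasurePreserving.tendsto_ae
    filter_upwards [h] with y hy
    have hy' : K (x - y) = Kt (x - y) := hy
    rw [hy']
  have hconv : conv (d := d) K = conv Kt := by
    funext E x
    unfold conv
    rw [hconvF]
  have hthresh : thresh K E₀ = thresh Kt E₀ := by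
    unfold thresh
    rw [hconv]
  have hPKr : PKr (d := d) K = PKr Kt := by
    funext D
    unfold PKr
    rw [hconv]
  have hSKr : SKr (d := d) K = SKr Kt := by
    funext D
    unfold SKr
    rw [hconv]
  rw [hthresh] at hbig
  rw [hSKr] at h𝒜
  rw [hPKr] at hmin
  rw [hthresh, hPKr, hconvF]
  constructor
  · exact fun F hF hFΩ => InheritAux.main_ineq hKtm hKt0 hKteven hKtint hKt1 hΩfin hE₀
      hbig 𝒜 h𝒜 hmin F hF hFΩ
  · intro hout F hF hFΩ
    have hmain := InheritAux.main_ineq hKtm hKt0 hKteven hKtint hKt1 hΩfin hE₀ hbig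
      (fun _ => 0)
      (fun F' hF' hF'sub => by
        simp only [neg_nonpos]
        rw [InheritAux.SKr_eq hKtm hKt0 hKtint hKt1 hF']
        exact InheritAux.jr_nonneg F' F')
      (fun F' hF' hF'sub => by simpa using hout F' hF' hF'sub) F hF hFΩ
    simp only [add_zero] at hmain
    -- the correction term is nonnegative
    set E₁ := thresh Kt E₀ with hE₁def
    have hE₁m : MeasurableSet E₁ :=
      measurableSet_lt measurable_const (InheritAux.conv_measurable hKtm hKt0 hE₀)
    have hAm : MeasurableSet (E₀ \ E₁) := hE₀.diff hE₁m
    have hNm : MeasurableSet (F ∩ (E₀ \ E₁)) := hF.inter hAm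
    have hNfin : volume (F ∩ (E₀ \ E₁)) ≠ ⊤ :=
      (lt_of_le_of_lt (measure_mono fun x hx => hFΩ hx.1) hΩfin).ne
    have hcorr := InheritAux.corr_eq hKtm hKt0 hKtint hKt1 hAm hNm hNfin
    rw [hcorr] at hmain
    have hmono : InheritAux.jr Kt (F ∩ (E₀ \ E₁)) (F ∩ (E₀ \ E₁))
        ≤ InheritAux.jr Kt (F ∩ (E₀ \ E₁)) (E₀ \ E₁) :=
      InheritAux.jr_mono_right hKtm hKt0 hKtint hKt1 (fun x hx => hx.2) hNfin
    have hnn := InheritAux.jr_nonneg (K := Kt) (F ∩ (E₀ \ E₁)) (E₀ \ E₁)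
    linarith
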